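/- Let w = u a be an area sequence of size n ≥ 2 with u its prefix of size n − 1, and let b_1 … b_n be the bounce sequence of w. Then b_n = 0 if and only if max(ψ(w)) = max(ψ(u)) + 1. -/

import Mathlib

/-- The `i`-th letter of the word `w` (`1`-indexed, as in the paper);
defaults to `0` out of range. -/
def get1 (w : List ℕ) (i : ℕ) : ℕ := w.getD (i - 1) 0

/-- `w` is the area sequence of a Dyck path: the first letter is `0` and each
letter exceeds the previous one by at most one. -/
def IsAreaSeq (w : List ℕ) : Prop :=
  (w ≠ [] → get1 w 1 = 0) ∧ ∀ i, 1 ≤ i → i < w.length → get1 w (i + 1) ≤ get1 w i + 1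

/-- Insertion at position `i` (for `0 ≤ i ≤ n`): `ins w 0` prepends a `0`, and
for `1 ≤ i ≤ n`, `ins w i` inserts the letter `w_i + 1` just after position `i`. -/
def ins (w : List ℕ) (i : ℕ) : List ℕ :=
  w.take i ++ (if i = 0 then 0 else get1 w i + 1) :: w.drop i

/-- The area statistic: the sum of the letters. -/
def area (w : List ℕ) : ℕ := w.sum

/-- The dinv statistic: `dinv w = Σ_i d_i` where `d_i` is the number of `j > i`
with `w_j = w_i` or `w_j = w_i - 1`. -/
def dinv (w : List ℕ) : ℕ :=
  ∑ i ∈ Finset.Icc 1 w.length,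
    ((Finset.Ioc i w.length).filter
      (fun j => get1 w j = get1 w i ∨ get1 w j + 1 = get1 w i)).card

/-- The maximal value of a word (`0` for the empty word). -/
def maxVal (w : List ℕ) : ℕ := w.foldr max 0

/-- Positions of the letters of maximal value `m`. -/
def Maxb (w : List ℕ) : Finset ℕ :=
  (Finset.Icc 1 w.length).filter (fun i => get1 w i = maxVal w)

/-- Positions `i` with `w_i = m - 1` such that all letters after position `i`
are `< m`. -/
def Maxa (w : List ℕ) : Finset ℕ :=
  (Finset.Icc 1 w.length).filter (fun i =>
    get1 w i + 1 = maxVal w ∧ ∀ j ∈ Finset.Ioc i w.length, get1 w j < maxVal w)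

/-- The position of the leftmost letter equal to the maximal value `m` in the
rightmost block of consecutive letters equal to `m`. -/
def i0 (w : List ℕ) : ℕ :=
  ((Finset.Icc 1 w.length).filter (fun i =>
    get1 w i = maxVal w ∧ (i = 1 ∨ get1 w (i - 1) ≠ maxVal w))).sup id

/-- The admissible insertion positions of `w`, listed in admissible order:
the elements of `Maxb w` in decreasing order, then the elements of `Maxa w`
in decreasing order, then `i0 w - 1`.  The empty word has the single
admissible insertion position `0`. -/
def admissible (w : List ℕ) : List ℕ :=
  if w = [] then [0]
  else ((Maxb w).sort (· ≤ ·)).reverse ++ ((Maxa w).sort (· ≤ ·)).reverse ++ [i0 w - 1]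

/-- Auxiliary version of the map `ψ`, reading the reversed word. -/
def psiRev : List ℕ → List ℕ
  | [] => []
  | a :: u => ins (psiRev u) ((admissible (psiRev u)).getD a 0)

/-- The map `ψ`: `ψ(ε) = ε` and `ψ(u a) = ins_{c_a}(ψ(u))` where
`c_0, c_1, …, c_k` are the admissible insertion positions of `ψ(u)` in
admissible order. -/
def psi (w : List ℕ) : List ℕ := psiRev w.reverse

/-- The bounce sequence: `b_1 = 0`, and `b_i = b_{i-1} + 1` if
`b_{i-1} + 1 ≤ w_i`, otherwise `b_i = 0`. -/
def bseq (w : List ℕ) : ℕ → ℕ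
  | 0 => 0
  | 1 => 0
  | (i + 2) => if bseq w (i + 1) + 1 ≤ get1 w (i + 2) then bseq w (i + 1) + 1 else 0

/-- The bounces of `w`: positions `1 < i ≤ n` with `b_i = 0`. -/
def bounces (w : List ℕ) : Finset ℕ :=
  (Finset.Icc 2 w.length).filter (fun i => bseq w i = 0)

/-- The bounce statistic: the sum of the reversed positions `n - i + 1` of the
bounces of `w`. -/
def bounce (w : List ℕ) : ℕ := ∑ i ∈ bounces w, (w.length - i + 1)


/-!
If `w` has last letter `ℓ` and last bounce value `B`, then `ψ(w)` has exactly `B + 1` maximal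
letters and `ℓ - B` positions in `Maxa`, so its admissible list consists of the `B + 1` maximal
positions, then the `ℓ - B` positions of `Maxa`, then `i0 - 1`. Appending `a ≤ B` makes the new
bounce value `0` and selects a maximal position, so the inserted letter `m + 1` raises the
maximum `m`. Appending `a > B` makes it `B + 1` and selects a position carrying `m - 1` (or
prepends `0` to an all-zero word), so the inserted letter is `m` and the maximum is kept. The
invariant propagates because after the insertion `Maxa` consists of the shifted positions of the
selected kind (maximal, resp. in `Maxa`) to the right of the insertion point, and the admissible
order lists each kind from right to left.
-/

theorem get1_append_left {u : List ℕ} (v : List ℕ) {i : ℕ} (h1 : 1 ≤ i) (h2 : i ≤ u.length) :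
    get1 (u ++ v) i = get1 u i := by
  rw [get1, get1, List.getD_append _ _ _ _ (by omega)]

theorem get1_append_singleton_length (u : List ℕ) (a : ℕ) : get1 (u ++ [a]) (u.length + 1) = a := by
  simp [get1]

theorem IsAreaSeq.of_append_singleton {u : List ℕ} {a : ℕ} (h : IsAreaSeq (u ++ [a])) :
    IsAreaSeq u := by
  refine ⟨fun hu => ?_, fun i h1 h2 => ?_⟩
  · rw [← get1_append_left [a] le_rfl (List.length_pos_iff.mpr hu)]
    exact h.1 (by simp)
  · have := h.2 i h1 (by simp; omega)
    rwa [get1_append_left _ (by omega) (by omega), get1_append_left _ (by omega) (by omega)] at this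

theorem IsAreaSeq.last_le {u : List ℕ} {a : ℕ} (h : IsAreaSeq (u ++ [a])) (hu : u ≠ []) :
    a ≤ get1 u u.length + 1 := by
  have hpos := List.length_pos_iff.mpr hu
  have := h.2 u.length hpos (by simp)
  rwa [get1_append_singleton_length, get1_append_left [a] hpos le_rfl] at this

theorem length_ins {w : List ℕ} {c : ℕ} (hc : c ≤ w.length) : (ins w c).length = w.length + 1 := by
  simp [ins]
  omega

theorem get1_ins_of_le {w : List ℕ} {c j : ℕ} (hc : c ≤ w.length) (h1 : 1 ≤ j) (h2 : j ≤ c) :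
    get1 (ins w c) j = get1 w j := by
  rw [ins, get1, List.getD_append _ _ _ _ (by simp; omega)]
  simp [get1, List.getD_eq_getElem?_getD, show j - 1 < c by omega]

theorem get1_ins_self {w : List ℕ} {c : ℕ} (hc : c ≤ w.length) :
    get1 (ins w c) (c + 1) = if c = 0 then 0 else get1 w c + 1 := by
  rw [ins, get1, List.getD_append_right _ _ _ _ (by simp)]
  simp [hc]

theorem get1_ins_of_lt {w : List ℕ} {c j : ℕ} (hc : c ≤ w.length) (h : c + 2 ≤ j) :
    get1 (ins w c) j = get1 w (j - 1) := by
  rw [ins, get1, get1, List.getD_append_right _ _ _ _ (by simp; omega),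
    List.length_take_of_le hc, show j - 1 - c = (j - 2 - c) + 1 by omega, List.getD_cons_succ]
  simp only [List.getD_eq_getElem?_getD, List.getElem?_drop]
  congr 2
  omega

theorem IsAreaSeq.ins {w : List ℕ} {c : ℕ} (hw : IsAreaSeq w) (hc : c ≤ w.length) :
    IsAreaSeq (ins w c) := by
  refine ⟨fun _ => ?_, fun i hi1 hi2 => ?_⟩
  · rcases Nat.eq_zero_or_pos c with rfl | hc0
    · simpa using get1_ins_self (w := w) hc
    · rw [get1_ins_of_le hc le_rfl hc0]
      exact hw.1 (by rintro rfl; simp at hc; omega)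
  rw [length_ins hc] at hi2
  rcases lt_trichotomy i c with hic | rfl | hic
  · rw [get1_ins_of_le hc (by omega) hic, get1_ins_of_le hc hi1 hic.le]
    exact hw.2 i hi1 (by omega)
  · rw [get1_ins_self hc, get1_ins_of_le hc hi1 le_rfl, if_neg (by omega)]
  rcases Nat.lt_or_ge (c + 1) i with hci | hci
  · rw [get1_ins_of_lt hc (by omega), get1_ins_of_lt hc (by omega)]
    simpa [show i - 1 + 1 = i by omega] using hw.2 (i - 1) (by omega) (by omega)
  obtain rfl : i = c + 1 := by omega
  rw [get1_ins_of_lt hc le_rfl, get1_ins_self hc, show c + 2 - 1 = c + 1 by omega]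
  rcases Nat.eq_zero_or_pos c with rfl | hc0
  · simp [hw.1 (by rintro rfl; simp at hi2)]
  · rw [if_neg (by omega)]
    have := hw.2 c hc0 (by omega)
    omega

theorem ins_perm (w : List ℕ) (c : ℕ) :
    (ins w c).Perm ((if c = 0 then 0 else get1 w c + 1) :: w) := by
  have h := List.perm_middle (a := if c = 0 then 0 else get1 w c + 1) (l₁ := w.take c)
    (l₂ := w.drop c)
  rwa [List.take_append_drop] at h

theorem maxVal_ins (w : List ℕ) (c : ℕ) :
    maxVal (ins w c) = max (if c = 0 then 0 else get1 w c + 1) (maxVal w) :=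
  (ins_perm w c).foldr_eq 0

theorem le_maxVal_of_mem {w : List ℕ} {x : ℕ} (h : x ∈ w) : x ≤ maxVal w := by
  induction w with
  | nil => simp at h
  | cons a t ih =>
    rcases List.mem_cons.mp h with rfl | h
    · exact le_max_left _ _
    · exact (ih h).trans (le_max_right _ _)

theorem get1_le_maxVal (w : List ℕ) (i : ℕ) : get1 w i ≤ maxVal w := by
  rcases Nat.lt_or_ge (i - 1) w.length with h | h
  · rw [get1, List.getD_eq_getElem _ _ h]
    exact le_maxVal_of_mem (List.getElem_mem h)
  · rw [get1, List.getD_eq_default _ _ h]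
    exact Nat.zero_le _

theorem card_filter_get1_eq (w : List ℕ) (x : ℕ) :
    ((Finset.Icc 1 w.length).filter (fun i => get1 w i = x)).card = w.count x := by
  induction w using List.reverseRecOn with
  | nil => simp
  | append_singleton u a ih =>
    rw [List.length_append, List.length_singleton, Finset.card_filter,
      Finset.sum_Icc_succ_top (by omega), Finset.sum_congr rfl fun i hi => by
        rw [get1_append_left [a] (Finset.mem_Icc.mp hi).1 (Finset.mem_Icc.mp hi).2],
      ← Finset.card_filter, ih, get1_append_singleton_length, List.count_append,
      List.count_singleton]
    simp

theorem card_Maxb_eq_count (w : List ℕ) : (Maxb w).card = w.count (maxVal w) :=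
  card_filter_get1_eq w _

theorem mem_Maxb {w : List ℕ} {i : ℕ} :
    i ∈ Maxb w ↔ (1 ≤ i ∧ i ≤ w.length) ∧ get1 w i = maxVal w := by
  simp [Maxb]

theorem mem_Maxa {w : List ℕ} {i : ℕ} :
    i ∈ Maxa w ↔ (1 ≤ i ∧ i ≤ w.length) ∧ get1 w i + 1 = maxVal w ∧
      ∀ j, i < j → j ≤ w.length → get1 w j < maxVal w := by
  simp [Maxa, and_assoc]

section Insertion

variable {w : List ℕ} {c : ℕ}

theorem maxVal_ins_of_mem_Maxb (hc : c ∈ Maxb w) : maxVal (ins w c) = maxVal w + 1 := by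
  obtain ⟨⟨hc1, -⟩, hcm⟩ := mem_Maxb.mp hc
  rw [maxVal_ins, if_neg (by omega), hcm]
  omega

theorem card_Maxb_ins_of_mem_Maxb (hc : c ∈ Maxb w) : (Maxb (ins w c)).card = 1 := by
  obtain ⟨⟨hc1, -⟩, hcm⟩ := mem_Maxb.mp hc
  have hnotMem : maxVal w + 1 ∉ w := fun h => by have := le_maxVal_of_mem h; omega
  rw [card_Maxb_eq_count, maxVal_ins_of_mem_Maxb hc, (ins_perm w c).count_eq, List.count_cons,
    List.count_eq_zero.mpr hnotMem]
  simp [show c ≠ 0 by omega, hcm]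

theorem maxVal_ins_of_eq_maxVal (h : (if c = 0 then 0 else get1 w c + 1) = maxVal w) :
    maxVal (ins w c) = maxVal w := by
  rw [maxVal_ins, h, max_self]

theorem card_Maxb_ins_of_eq_maxVal (h : (if c = 0 then 0 else get1 w c + 1) = maxVal w) :
    (Maxb (ins w c)).card = (Maxb w).card + 1 := by
  rw [card_Maxb_eq_count, card_Maxb_eq_count, maxVal_ins_of_eq_maxVal h, (ins_perm w c).count_eq,
    List.count_cons, h]
  simp

-- The inserted letter at `c + 1` is maximal, so `Maxa (ins w c)` lies to its right, where
-- `i ↦ i + 1` matches it with positions of `w` after `c`.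
theorem card_Maxa_ins (hc1 : 1 ≤ c) (hc2 : c ≤ w.length) (hM : get1 w c + 1 = maxVal (ins w c)) :
    (Maxa (ins w c)).card = ((Finset.Ioc c w.length).filter fun i =>
      get1 w i + 1 = maxVal (ins w c) ∧
        ∀ j ∈ Finset.Ioc i w.length, get1 w j < maxVal (ins w c)).card := by
  conv_rhs => rw [← Finset.card_image_of_injective _ (add_left_injective 1)]
  congr 1
  ext i
  have hself := get1_ins_self hc2
  rw [if_neg (by omega), hM] at hself
  simp only [mem_Maxa, length_ins hc2, Finset.mem_image, Finset.mem_filter, Finset.mem_Ioc]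
  constructor
  · rintro ⟨⟨hi1, hi2⟩, hval, hafter⟩
    have hci : c + 2 ≤ i := by
      by_contra hlt
      rcases Nat.lt_or_ge i (c + 1) with h | h
      · have := hafter (c + 1) h (by omega)
        omega
      · rw [show i = c + 1 by omega] at hval
        omega
    refine ⟨i - 1, ⟨⟨by omega, by omega⟩, ?_, fun j hj => ?_⟩, by omega⟩
    · rwa [← get1_ins_of_lt hc2 hci]
    · have := hafter (j + 1) (by omega) (by omega)
      rwa [get1_ins_of_lt hc2 (by omega), Nat.add_sub_cancel] at this
  · rintro ⟨i, ⟨⟨hci, hi⟩, hval, hafter⟩, rfl⟩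
    refine ⟨⟨by omega, by omega⟩, ?_, fun j hj1 hj2 => ?_⟩
    · rwa [get1_ins_of_lt hc2 (by omega), Nat.add_sub_cancel]
    · rw [get1_ins_of_lt hc2 (by omega)]
      exact hafter (j - 1) ⟨by omega, by omega⟩

theorem card_Maxa_ins_of_mem_Maxb (hc : c ∈ Maxb w) :
    (Maxa (ins w c)).card = ((Maxb w).filter (c < ·)).card := by
  obtain ⟨⟨hc1, hc2⟩, hcm⟩ := mem_Maxb.mp hc
  have hM := maxVal_ins_of_mem_Maxb hc
  rw [card_Maxa_ins hc1 hc2 (by omega), hM]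
  congr 1
  ext i
  simp only [Finset.mem_filter, Finset.mem_Ioc, mem_Maxb]
  have := fun j => get1_le_maxVal w j
  grind

theorem card_Maxa_ins_of_succ_eq_maxVal (hc1 : 1 ≤ c) (hc2 : c ≤ w.length)
    (hcm : get1 w c + 1 = maxVal w) :
    (Maxa (ins w c)).card = ((Maxa w).filter (c < ·)).card := by
  have hM := maxVal_ins_of_eq_maxVal (c := c) (by rwa [if_neg (by omega)])
  rw [card_Maxa_ins hc1 hc2 (by omega), hM]
  congr 1
  ext i
  simp only [Finset.mem_filter, Finset.mem_Ioc, mem_Maxa]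
  grind

end Insertion

theorem List.Pairwise.length_filter_lt_getElem {α : Type*} [LinearOrder α] {L : List α}
    (hL : L.Pairwise (· > ·)) {a : ℕ} (ha : a < L.length) :
    (L.filter (L[a] < ·)).length = a := by
  have hget := List.pairwise_iff_getElem.mp hL
  have htake : (L.take a).filter (L[a] < ·) = L.take a := by
    refine List.filter_eq_self.mpr fun x hx => ?_
    obtain ⟨i, hi, rfl⟩ := List.getElem_of_mem hx
    simp only [List.length_take] at hi
    simpa [List.getElem_take] using hget i a (by omega) ha (by omega)
  have hdrop : (L.drop a).filter (L[a] < ·) = [] := by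
    refine List.filter_eq_nil_iff.mpr fun x hx => ?_
    obtain ⟨i, hi, rfl⟩ := List.getElem_of_mem hx
    simp only [List.length_drop] at hi
    rcases Nat.eq_zero_or_pos i with rfl | hi0
    · simp
    · simpa [List.getElem_drop] using (hget a (a + i) ha (by omega) (by omega)).le
  have hsplit := congrArg (List.filter (L[a] < ·)) (List.take_append_drop a L)
  rw [List.filter_append, htake, hdrop, List.append_nil] at hsplit
  rw [← hsplit, List.length_take, min_eq_left ha.le]

theorem getD_sort_reverse_mem {α : Type*} [LinearOrder α] (s : Finset α) (d : α) {a : ℕ}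
    (ha : a < s.card) : (s.sort (· ≤ ·)).reverse.getD a d ∈ s := by
  rw [← Finset.mem_sort (· ≤ ·), ← List.mem_reverse, List.getD_eq_getElem _ _ (by simpa using ha)]
  exact List.getElem_mem _

theorem card_filter_lt_getD_sort_reverse {α : Type*} [LinearOrder α] (s : Finset α) (d : α)
    {a : ℕ} (ha : a < s.card) :
    (s.filter ((s.sort (· ≤ ·)).reverse.getD a d < ·)).card = a := by
  set L := (s.sort (· ≤ ·)).reverse
  have hlen : a < L.length := by simpa [L] using ha
  have hL : L.Pairwise (· > ·) := List.pairwise_reverse.mpr (Finset.sortedLT_sort s).pairwise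
  have hs : L.toFinset = s := by simp [L]
  rw [List.getD_eq_getElem _ _ hlen]
  have hnodup : L.Nodup := List.nodup_reverse.mpr (s.sort_nodup _)
  conv_rhs => rw [← hL.length_filter_lt_getElem hlen,
    ← List.toFinset_card_of_nodup (hnodup.filter _), List.toFinset_filter, hs]
  simp

theorem maxVal_mem {w : List ℕ} (hw : w ≠ []) : maxVal w ∈ w := by
  induction w with
  | nil => contradiction
  | cons a t ih =>
    show max a (maxVal t) ∈ a :: t
    rcases eq_or_ne t [] with rfl | ht
    · simp [maxVal]
    · rcases max_choice a (maxVal t) with h | h <;> rw [h]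
      · exact List.mem_cons_self
      · exact List.mem_cons_of_mem _ (ih ht)

theorem Maxa_eq_empty_of_maxVal_eq_zero {w : List ℕ} (h : maxVal w = 0) : Maxa w = ∅ :=
  Finset.eq_empty_of_forall_notMem fun _ hi => by simp [mem_Maxa, h] at hi

theorem lt_of_mem_Maxa {w : List ℕ} {i x : ℕ} (hx : x ∈ Maxa w) (hi : i ≤ w.length)
    (him : get1 w i = maxVal w) : i < x := by
  obtain ⟨-, hxm, hafter⟩ := mem_Maxa.mp hx
  by_contra! hle
  rcases hle.lt_or_eq with hlt | rfl
  · have := hafter i hlt hi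
    omega
  · omega

theorem i0_le_length (w : List ℕ) : i0 w ≤ w.length :=
  Finset.sup_le fun _ hi => (Finset.mem_Icc.mp (Finset.mem_filter.mp hi).1).2

theorem i0_le_one_of_maxVal_eq_zero {w : List ℕ} (h : maxVal w = 0) : i0 w ≤ 1 := by
  refine Finset.sup_le fun i hi => ?_
  have := get1_le_maxVal w (i - 1)
  simp only [Finset.mem_filter] at hi
  show i ≤ 1
  omega

theorem i0_mem {w : List ℕ} (hne : w ≠ []) :
    i0 w ∈ (Finset.Icc 1 w.length).filter fun i =>
      get1 w i = maxVal w ∧ (i = 1 ∨ get1 w (i - 1) ≠ maxVal w) := by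
  set S := (Finset.Icc 1 w.length).filter fun i =>
    get1 w i = maxVal w ∧ (i = 1 ∨ get1 w (i - 1) ≠ maxVal w)
  have hex : ∃ i, 1 ≤ i ∧ i ≤ w.length ∧ get1 w i = maxVal w := by
    obtain ⟨i, hi, him⟩ := List.getElem_of_mem (maxVal_mem hne)
    exact ⟨i + 1, by omega, by omega, by simp [get1, hi, him]⟩
  obtain ⟨hk1, hkn, hkm⟩ := Nat.find_spec hex
  have hfirst : Nat.find hex = 1 ∨ get1 w (Nat.find hex - 1) ≠ maxVal w := by
    by_contra! h
    exact Nat.find_min hex (m := Nat.find hex - 1) (by omega) ⟨by omega, by omega, h.2⟩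
  obtain ⟨i, hi, hsup⟩ := Finset.exists_mem_eq_sup S
    ⟨Nat.find hex, Finset.mem_filter.mpr ⟨Finset.mem_Icc.mpr ⟨hk1, hkn⟩, hkm, hfirst⟩⟩ id
  rwa [i0, hsup]

theorem i0_spec {w : List ℕ} (hw : IsAreaSeq w) (hm : 0 < maxVal w) :
    2 ≤ i0 w ∧ get1 w (i0 w) = maxVal w ∧ get1 w (i0 w - 1) + 1 = maxVal w := by
  have hne : w ≠ [] := by rintro rfl; simp [maxVal] at hm
  obtain ⟨hi, him, hstart⟩ := Finset.mem_filter.mp (i0_mem hne)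
  have hi1 : i0 w ≠ 1 := by rintro h; rw [h, hw.1 hne] at him; omega
  have hstep := hw.2 (i0 w - 1) (by grind) (by grind)
  rw [Nat.sub_add_cancel (by grind)] at hstep
  have := get1_le_maxVal w (i0 w - 1)
  exact ⟨by grind, him, by grind⟩

theorem getD_admissible_le_length (w : List ℕ) (a : ℕ) : (admissible w).getD a 0 ≤ w.length := by
  have hmem : ∀ x ∈ admissible w, x ≤ w.length := by
    unfold admissible
    split_ifs with hw
    · simp [hw]
    · simp only [List.mem_append, List.mem_reverse, Finset.mem_sort, List.mem_singleton]
      rintro x ((hx | hx) | rfl)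
      · exact (mem_Maxb.mp hx).1.2
      · exact (mem_Maxa.mp hx).1.2
      · exact (Nat.sub_le _ _).trans (i0_le_length w)
  rcases lt_or_ge a (admissible w).length with h | h
  · rw [List.getD_eq_getElem _ _ h]
    exact hmem _ (List.getElem_mem h)
  · rw [List.getD_eq_default _ _ h]
    exact Nat.zero_le _

section Admissible

variable {w : List ℕ} (hw : w ≠ []) {a : ℕ}
include hw

theorem getD_admissible_of_lt_card_Maxb (ha : a < (Maxb w).card) :
    (admissible w).getD a 0 = ((Maxb w).sort (· ≤ ·)).reverse.getD a 0 := by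
  rw [admissible, if_neg hw, List.append_assoc, List.getD_append _ _ _ _ (by simpa using ha)]

theorem getD_admissible_of_card_Maxb_le (h1 : (Maxb w).card ≤ a)
    (h2 : a < (Maxb w).card + (Maxa w).card) :
    (admissible w).getD a 0 = ((Maxa w).sort (· ≤ ·)).reverse.getD (a - (Maxb w).card) 0 := by
  rw [admissible, if_neg hw, List.append_assoc, List.getD_append_right _ _ _ _ (by simpa using h1),
    List.getD_append _ _ _ _ (by simp; omega)]
  simp

theorem getD_admissible_card_add_card :
    (admissible w).getD ((Maxb w).card + (Maxa w).card) 0 = i0 w - 1 := by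
  rw [admissible, if_neg hw, List.getD_append_right _ _ _ _ (by simp)]
  simp

end Admissible

section InsertionAtI0

variable {w : List ℕ} (hw : IsAreaSeq w)
include hw

theorem ins_letter_i0_eq_maxVal :
    (if i0 w - 1 = 0 then 0 else get1 w (i0 w - 1) + 1) = maxVal w := by
  rcases Nat.eq_zero_or_pos (maxVal w) with hm | hm
  · rw [if_pos (by have := i0_le_one_of_maxVal_eq_zero hm; omega), hm]
  · obtain ⟨h2, -, hprev⟩ := i0_spec hw hm
    rw [if_neg (by omega), hprev]

theorem card_Maxa_ins_i0 : (Maxa (ins w (i0 w - 1))).card = (Maxa w).card := by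
  have hlen := i0_le_length w
  rcases Nat.eq_zero_or_pos (maxVal w) with hm | hm
  · have hm' : maxVal (ins w (i0 w - 1)) = 0 := by
      rw [maxVal_ins_of_eq_maxVal (ins_letter_i0_eq_maxVal hw), hm]
    rw [Maxa_eq_empty_of_maxVal_eq_zero hm, Maxa_eq_empty_of_maxVal_eq_zero hm']
  · obtain ⟨h2, him, hprev⟩ := i0_spec hw hm
    rw [card_Maxa_ins_of_succ_eq_maxVal (by omega) (by omega) hprev,
      Finset.filter_true_of_mem fun x hx => by have := lt_of_mem_Maxa hx hlen him; omega]

end InsertionAtI0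

theorem ins_admissible_of_lt_card_Maxb {w : List ℕ} {a : ℕ} (ha : a < (Maxb w).card) :
    maxVal (ins w ((admissible w).getD a 0)) = maxVal w + 1 ∧
      (Maxb (ins w ((admissible w).getD a 0))).card = 1 ∧
      (Maxa (ins w ((admissible w).getD a 0))).card = a := by
  have hne : w ≠ [] := by rintro rfl; simp [Maxb] at ha
  have hc := getD_sort_reverse_mem (Maxb w) 0 ha
  rw [getD_admissible_of_lt_card_Maxb hne ha]
  exact ⟨maxVal_ins_of_mem_Maxb hc, card_Maxb_ins_of_mem_Maxb hc,
    (card_Maxa_ins_of_mem_Maxb hc).trans (card_filter_lt_getD_sort_reverse _ _ ha)⟩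

theorem ins_admissible_of_card_Maxb_le {w : List ℕ} {a : ℕ} (hw : IsAreaSeq w) (hne : w ≠ [])
    (h1 : (Maxb w).card ≤ a) (h2 : a ≤ (Maxb w).card + (Maxa w).card) :
    maxVal (ins w ((admissible w).getD a 0)) = maxVal w ∧
      (Maxb (ins w ((admissible w).getD a 0))).card = (Maxb w).card + 1 ∧
      (Maxb w).card + (Maxa (ins w ((admissible w).getD a 0))).card = a := by
  rcases h2.lt_or_eq with hlt | rfl
  · have hk : a - (Maxb w).card < (Maxa w).card := by omega
    rw [getD_admissible_of_card_Maxb_le hne h1 hlt]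
    set c := ((Maxa w).sort (· ≤ ·)).reverse.getD (a - (Maxb w).card) 0
    obtain ⟨⟨hc1, hc2⟩, hcm, -⟩ := mem_Maxa.mp (getD_sort_reverse_mem (Maxa w) 0 hk)
    have hletter : (if c = 0 then 0 else get1 w c + 1) = maxVal w := by rw [if_neg (by omega), hcm]
    refine ⟨maxVal_ins_of_eq_maxVal hletter, card_Maxb_ins_of_eq_maxVal hletter, ?_⟩
    rw [card_Maxa_ins_of_succ_eq_maxVal hc1 hc2 hcm, card_filter_lt_getD_sort_reverse _ _ hk]
    omega
  · rw [getD_admissible_card_add_card hne, card_Maxa_ins_i0 hw]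
    exact ⟨maxVal_ins_of_eq_maxVal (ins_letter_i0_eq_maxVal hw),
      card_Maxb_ins_of_eq_maxVal (ins_letter_i0_eq_maxVal hw), rfl⟩

theorem psi_append_singleton (u : List ℕ) (a : ℕ) :
    psi (u ++ [a]) = ins (psi u) ((admissible (psi u)).getD a 0) := by
  simp [psi, psiRev]

theorem isAreaSeq_psi (w : List ℕ) : IsAreaSeq (psi w) := by
  induction w using List.reverseRecOn with
  | nil => exact ⟨fun h => absurd rfl h, fun i _ h => by simp [psi, psiRev] at h⟩
  | append_singleton u a ih =>
    rw [psi_append_singleton]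
    exact ih.ins (getD_admissible_le_length _ _)

theorem psi_ne_nil {w : List ℕ} (hw : w ≠ []) : psi w ≠ [] := by
  cases w using List.reverseRecOn with
  | nil => contradiction
  | append_singleton u a => simp [psi_append_singleton, ins]

theorem bseq_succ (w : List ℕ) {i : ℕ} (h : 1 ≤ i) :
    bseq w (i + 1) = if bseq w i + 1 ≤ get1 w (i + 1) then bseq w i + 1 else 0 := by
  obtain ⟨k, rfl⟩ : ∃ k, i = k + 1 := ⟨i - 1, by omega⟩
  rfl

theorem bseq_append (u v : List ℕ) : ∀ i ≤ u.length, bseq (u ++ v) i = bseq u i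
  | 0, _ => rfl
  | 1, _ => rfl
  | k + 2, h => by
    rw [bseq_succ (u ++ v) (i := k + 1) (by omega), bseq_succ u (i := k + 1) (by omega),
      bseq_append u v (k + 1) (by omega), get1_append_left v (by omega) h]

theorem bseq_append_singleton {u : List ℕ} (hu : u ≠ []) (a : ℕ) :
    bseq (u ++ [a]) (u.length + 1) =
      if bseq u u.length + 1 ≤ a then bseq u u.length + 1 else 0 := by
  rw [bseq_succ _ (List.length_pos_iff.mpr hu), get1_append_singleton_length,
    bseq_append _ _ _ le_rfl]

theorem card_Maxb_psi_card_Maxa_psi {w : List ℕ} (hw : IsAreaSeq w) (hne : w ≠ []) :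
    (Maxb (psi w)).card = bseq w w.length + 1 ∧
      bseq w w.length + (Maxa (psi w)).card = get1 w w.length := by
  induction w using List.reverseRecOn with
  | nil => contradiction
  | append_singleton u a ih =>
    rw [List.length_append, List.length_singleton, get1_append_singleton_length,
      psi_append_singleton]
    rcases eq_or_ne u [] with rfl | hu
    · obtain rfl : a = 0 := by simpa [get1] using hw.1 (by simp)
      decide
    obtain ⟨hb, hℓ⟩ := ih hw.of_append_singleton hu
    have hle := hw.last_le hu
    rw [bseq_append_singleton hu]
    split_ifs with hB
    · obtain ⟨-, hb', hℓ'⟩ :=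
        ins_admissible_of_card_Maxb_le (a := a) (isAreaSeq_psi u) (psi_ne_nil hu) (by omega)
          (by omega)
      omega
    · obtain ⟨-, hb', hℓ'⟩ := ins_admissible_of_lt_card_Maxb (w := psi u) (a := a) (by omega)
      omega

/-- For an area sequence `w = u a` of size `n ≥ 2` with bounce sequence
`b_1 … b_n`, we have `b_n = 0` if and only if
`max (ψ w) = max (ψ u) + 1`. -/
theorem bseq_last_eq_zero_iff (u : List ℕ) (a : ℕ)
    (hw : IsAreaSeq (u ++ [a])) (hn : 2 ≤ (u ++ [a]).length) :
    bseq (u ++ [a]) (u ++ [a]).length = 0 ↔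
      maxVal (psi (u ++ [a])) = maxVal (psi u) + 1 := by
  have hu : u ≠ [] := by rintro rfl; simp at hn
  obtain ⟨hb, hℓ⟩ := card_Maxb_psi_card_Maxa_psi hw.of_append_singleton hu
  have hle := hw.last_le hu
  rw [List.length_append, List.length_singleton, bseq_append_singleton hu, psi_append_singleton]
  split_ifs with hB
  · rw [(ins_admissible_of_card_Maxb_le (a := a) (isAreaSeq_psi u) (psi_ne_nil hu) (by omega)
      (by omega)).1]
    simp
  · rw [(ins_admissible_of_lt_card_Maxb (by omega)).1]
    simp
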